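/- arXiv:2306.13778 — 5 statements merged into one kernel-verified Lean document; each statement's English description precedes it below -/
import Mathlib

section
/- Semi-discrete mass conservation: if the discrete pressure p_h solves ∫ u_h · s_h(u_h, ∇̃_h q_h) + ∫ ∇̃_h p_h · ∇̃_h q_h = 0 for all q_h ∈ V²_h, and u_h evolves by the discrete momentum equation, then d/dt div u_h = 0; hence div u_h(t) = 0 for all t if div u_h(0) = 0. -/
open RealInnerProductSpace

section Adjoint

variable {V1 V2 : Type*} [NormedAddCommGroup V1] [InnerProductSpace ℝ V1]
  [NormedAddCommGroup V2] [InnerProductSpace ℝ V2]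
  {div : V1 →ₗ[ℝ] V2} {tgrad : V2 →ₗ[ℝ] V1}

/-- Testing with `q = div v` gives `‖div v‖² = -⟪tgrad (div v), v⟫ = 0`. -/
theorem eq_zero_of_forall_inner_tgrad_eq_zero
    (htg : ∀ (q : V2) (v : V1), ⟪tgrad q, v⟫ = -⟪q, div v⟫) {v : V1}
    (hv : ∀ q : V2, ⟪tgrad q, v⟫ = 0) : div v = 0 := by
  have : ⟪div v, div v⟫ = 0 := by linarith [htg (div v) v, hv (div v)]
  exact inner_self_eq_zero.mp this

/-- Pairing with `tgrad q` reduces `div ∘ u` to the scalar functions `t ↦ ⟪tgrad q, u t⟫`,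
whose derivatives `-⟪q, div (u' t)⟫` vanish. -/
theorem div_eq_div_zero_of_div_deriv_eq_zero
    (htg : ∀ (q : V2) (v : V1), ⟪tgrad q, v⟫ = -⟪q, div v⟫)
    {u u' : ℝ → V1} (hu : ∀ t, HasDerivAt u (u' t) t) (hdiv' : ∀ t, div (u' t) = 0)
    (t : ℝ) : div (u t) = div (u 0) := by
  rw [← sub_eq_zero, ← map_sub]
  refine eq_zero_of_forall_inner_tgrad_eq_zero htg fun q => ?_
  have hderiv : ∀ r, HasDerivAt (fun r => ⟪tgrad q, u r⟫) 0 r := fun r => by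
    simpa [htg q (u' r), hdiv' r] using (hasDerivAt_const r (tgrad q)).inner ℝ (hu r)
  rw [inner_sub_right, sub_eq_zero]
  exact is_const_of_deriv_eq_zero (fun r => (hderiv r).differentiableAt)
    (fun r => (hderiv r).deriv) t 0

end Adjoint

/-- Testing the momentum equation with `tgrad q` kills the viscous term (`tcurl ∘ tgrad = 0`)
and, by the pressure equation, the convective and pressure terms together. -/
theorem inner_tgrad_eq_zero_of_momentum_of_pressure {V0 V1 V2 : Type*}
    [NormedAddCommGroup V0] [InnerProductSpace ℝ V0]
    [NormedAddCommGroup V1] [InnerProductSpace ℝ V1]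
    [NormedAddCommGroup V2] [InnerProductSpace ℝ V2]
    {tgrad : V2 →ₗ[ℝ] V1} {tcurl : V1 →ₗ[ℝ] V0} (htc0 : ∀ q : V2, tcurl (tgrad q) = 0)
    {s : V1 → V1 → V1} {ν : ℝ} {w a : V1} {π : V2}
    (hmom : ∀ v : V1, ⟪a, v⟫ + ⟪w, s w v⟫ + ⟪tgrad π, v⟫ + ν * ⟪tcurl w, tcurl v⟫ = 0)
    (hpres : ∀ q : V2, ⟪w, s w (tgrad q)⟫ + ⟪tgrad π, tgrad q⟫ = 0) (q : V2) :
    ⟪tgrad q, a⟫ = 0 := by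
  have hm := hmom (tgrad q)
  rw [htc0 q, inner_zero_right, mul_zero, add_zero] at hm
  rw [real_inner_comm]
  linarith [hpres q]

theorem stmt6_general {V0 V1 V2 : Type*}
    [NormedAddCommGroup V0] [InnerProductSpace ℝ V0]
    [NormedAddCommGroup V1] [InnerProductSpace ℝ V1]
    [NormedAddCommGroup V2] [InnerProductSpace ℝ V2]
    (div : V1 →ₗ[ℝ] V2) (tgrad : V2 →ₗ[ℝ] V1) (tcurl : V1 →ₗ[ℝ] V0)
    (htg : ∀ (q : V2) (v : V1), ⟪tgrad q, v⟫ = -⟪q, div v⟫)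
    (htc0 : ∀ q : V2, tcurl (tgrad q) = 0)
    (s : V1 → V1 → V1) (ν : ℝ)
    (u u' : ℝ → V1) (p : ℝ → V2)
    (hu : ∀ t, HasDerivAt u (u' t) t)
    (hmom : ∀ (t : ℝ) (v : V1), ⟪u' t, v⟫ + ⟪u t, s (u t) v⟫ + ⟪tgrad (p t), v⟫
        + ν * ⟪tcurl (u t), tcurl v⟫ = 0)
    (hpres : ∀ (t : ℝ) (q : V2),
        ⟪u t, s (u t) (tgrad q)⟫ + ⟪tgrad (p t), tgrad q⟫ = 0) :
    (∀ t, div (u' t) = 0) ∧ (div (u 0) = 0 → ∀ t, div (u t) = 0) := by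
  have hdiv' : ∀ t, div (u' t) = 0 := fun t =>
    eq_zero_of_forall_inner_tgrad_eq_zero htg
      (inner_tgrad_eq_zero_of_momentum_of_pressure htc0 (hmom t) (hpres t))
  refine ⟨hdiv', fun h0 t => ?_⟩
  rw [div_eq_div_zero_of_div_deriv_eq_zero htg hu hdiv' t, h0]

/-- semi-discrete mass conservation for the conforming FEEC scheme.
If the discrete pressure solves the discrete pressure equation and `u_h` evolves by
the discrete momentum equation, then `d/dt div u_h = 0`; hence `div u_h(t) = 0` for
all `t` if `div u_h(0) = 0`. -/
theorem stmt6 {V0 V1 V2 : Type*}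
    [NormedAddCommGroup V0] [InnerProductSpace ℝ V0]
    [NormedAddCommGroup V1] [InnerProductSpace ℝ V1]
    [NormedAddCommGroup V2] [InnerProductSpace ℝ V2]
    [FiniteDimensional ℝ V1] [FiniteDimensional ℝ V2]
    (div : V1 →ₗ[ℝ] V2) (tgrad : V2 →ₗ[ℝ] V1) (tcurl : V1 →ₗ[ℝ] V0)
    (htg : ∀ (q : V2) (v : V1), ⟪tgrad q, v⟫ = -⟪q, div v⟫)
    (htc0 : ∀ q : V2, tcurl (tgrad q) = 0)
    (s : V1 → V1 → V1) (ν : ℝ)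
    (u u' : ℝ → V1) (p : ℝ → V2)
    (hu : ∀ t, HasDerivAt u (u' t) t)
    (hmom : ∀ (t : ℝ) (v : V1), ⟪u' t, v⟫ + ⟪u t, s (u t) v⟫ + ⟪tgrad (p t), v⟫
        + ν * ⟪tcurl (u t), tcurl v⟫ = 0)
    (hpres : ∀ (t : ℝ) (q : V2),
        ⟪u t, s (u t) (tgrad q)⟫ + ⟪tgrad (p t), tgrad q⟫ = 0) :
    (∀ t, div (u' t) = 0) ∧ (div (u 0) = 0 → ∀ t, div (u t) = 0) :=
  stmt6_general div tgrad tcurl htg htc0 s ν u u' p hu hmom hpres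
end

section
/- Discrete velocity invariance (pressure robustness) of the FEEC scheme: if the forcing f is replaced by f + ∇ψ, then the discrete solution changes as (u_h, p_h) → (u_h, p_h + P̃⁰_h ψ), where P̃⁰_h is the L² projection onto V²_h. -/
open RealInnerProductSpace

/-!
Since `div V¹_h ⊆ V²_h`, the `L²` projection `P̃⁰_h ψ` cannot be told apart from `ψ` when paired
with divergences of discrete fields. Hence its discrete gradient `∇̃_h (P̃⁰_h ψ)` tests against
`V¹_h` exactly like the weak gradient `∇ψ`, and shifting the pressure by `P̃⁰_h ψ` absorbs the
extra forcing `∇ψ` in both the momentum and the pressure equation, leaving `u_h` unchanged.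
-/

section DiscreteGradient

variable {H W : Type*} [NormedAddCommGroup H] [InnerProductSpace ℝ H]
  [NormedAddCommGroup W] [InnerProductSpace ℝ W]
  {V1h : Submodule ℝ W} {V2h : Submodule ℝ H} [V2h.HasOrthogonalProjection]
  {div : W →ₗ[ℝ] H} {tgrad : V2h →ₗ[ℝ] W} {ψ : H} {gψ : W}

theorem inner_coe_orthogonalProjectionOnto_of_mem {x : H} (hx : x ∈ V2h) (ψ : H) :
    ⟪(V2h.orthogonalProjectionOnto ψ : H), x⟫ = ⟪ψ, x⟫ := by
  have h := V2h.starProjection_inner_eq_zero ψ x hx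
  rw [inner_sub_left, sub_eq_zero] at h
  exact h.symm

theorem inner_tgrad_orthogonalProjectionOnto (hdiv : ∀ v ∈ V1h, div v ∈ V2h)
    (htg : ∀ (q : V2h), ∀ v ∈ V1h, ⟪tgrad q, v⟫ = -⟪(q : H), div v⟫)
    (hg : ∀ v ∈ V1h, ⟪gψ, v⟫ = -⟪ψ, div v⟫) {v : W} (hv : v ∈ V1h) :
    ⟪tgrad (V2h.orthogonalProjectionOnto ψ), v⟫ = ⟪gψ, v⟫ := by
  rw [htg _ v hv, hg v hv, inner_coe_orthogonalProjectionOnto_of_mem (hdiv v hv)]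

theorem inner_tgrad_add_orthogonalProjectionOnto (hdiv : ∀ v ∈ V1h, div v ∈ V2h)
    (htg : ∀ (q : V2h), ∀ v ∈ V1h, ⟪tgrad q, v⟫ = -⟪(q : H), div v⟫)
    (hg : ∀ v ∈ V1h, ⟪gψ, v⟫ = -⟪ψ, div v⟫) (p : V2h) {v : W} (hv : v ∈ V1h) :
    ⟪tgrad (p + V2h.orthogonalProjectionOnto ψ), v⟫ = ⟪tgrad p, v⟫ + ⟪gψ, v⟫ := by
  rw [map_add, inner_add_left, inner_tgrad_orthogonalProjectionOnto hdiv htg hg hv]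

end DiscreteGradient

/-- discrete velocity invariance (pressure robustness) of the FEEC
scheme: if the forcing `f` is replaced by `f + ∇ψ`, then the discrete solution
changes as `(u_h, p_h) → (u_h, p_h + P̃⁰_h ψ)`, where `P̃⁰_h` is the `L²`
(orthogonal) projection onto `V²_h`. -/
theorem stmt8 {H W V0 : Type*}
    [NormedAddCommGroup H] [InnerProductSpace ℝ H]
    [NormedAddCommGroup W] [InnerProductSpace ℝ W]
    [NormedAddCommGroup V0] [InnerProductSpace ℝ V0]
    (V1h : Submodule ℝ W) (V2h : Submodule ℝ H) [CompleteSpace V2h]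
    (div : W →ₗ[ℝ] H) (hdiv : ∀ v ∈ V1h, div v ∈ V2h)
    (tgrad : V2h →ₗ[ℝ] W) (htgmem : ∀ q, tgrad q ∈ V1h)
    (htg : ∀ (q : V2h), ∀ v ∈ V1h, ⟪tgrad q, v⟫ = -⟪(q : H), div v⟫)
    (tcurl : W →ₗ[ℝ] V0)
    (s : W → W → W) (ν : ℝ)
    (u u' : ℝ → W) (p : ℝ → V2h) (f : ℝ → W)
    (ψ : H) (gψ : W)
    (hg : ∀ v ∈ V1h, ⟪gψ, v⟫ = -⟪ψ, div v⟫)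
    (hmom : ∀ t, ∀ v ∈ V1h, ⟪u' t, v⟫ + ⟪u t, s (u t) v⟫ + ⟪tgrad (p t), v⟫
        + ν * ⟪tcurl (u t), tcurl v⟫ = ⟪f t, v⟫)
    (hpres : ∀ (t : ℝ) (q : V2h), ⟪u t, s (u t) (tgrad q)⟫
        + ⟪tgrad (p t), tgrad q⟫ = ⟪f t, tgrad q⟫) :
    (∀ t, ∀ v ∈ V1h, ⟪u' t, v⟫ + ⟪u t, s (u t) v⟫
        + ⟪tgrad (p t + Submodule.orthogonalProjectionOnto V2h ψ), v⟫
        + ν * ⟪tcurl (u t), tcurl v⟫ = ⟪f t + gψ, v⟫)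
      ∧ (∀ (t : ℝ) (q : V2h), ⟪u t, s (u t) (tgrad q)⟫
        + ⟪tgrad (p t + Submodule.orthogonalProjectionOnto V2h ψ), tgrad q⟫
        = ⟪f t + gψ, tgrad q⟫) := by
  have shift := inner_tgrad_add_orthogonalProjectionOnto hdiv htg hg
  refine ⟨fun t v hv => ?_, fun t q => ?_⟩
  · rw [shift (p t) hv, inner_add_left, ← hmom t v hv]
    ring
  · rw [shift (p t) (htgmem q), inner_add_left, ← hpres t q]
    ring
end

section
/- The Crank-Nicolson FEEC scheme conserves discrete mass: if (u_h^{n+1}, p_h^{n+1}) solves the midpoint system, then div_h u_h^{n+1} = div_h u_h^n. -/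
/-! Testing the momentum equation with `v = ∇̃_h q` kills the curl and stabilisation terms, and
subtracting the pressure equation leaves `⟪u^{n+1} - u^n, ∇̃_h q⟫ = 0` for every `q`. Since
`∇̃_h = -div_hᵀ`, the choice `q = div_h (u^{n+1} - u^n)` gives `‖div_h (u^{n+1} - u^n)‖² = 0`. -/

open RealInnerProductSpace

theorem LinearMap.map_eq_zero_of_inner_neg_adjoint_eq_zero {E F : Type*}
    [NormedAddCommGroup E] [InnerProductSpace ℝ E]
    [NormedAddCommGroup F] [InnerProductSpace ℝ F]
    (A : E →ₗ[ℝ] F) (B : F →ₗ[ℝ] E) (hB : ∀ q v, ⟪B q, v⟫ = -⟪q, A v⟫) {w : E}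
    (hw : ∀ q, ⟪B q, w⟫ = 0) : A w = 0 := by
  refine inner_self_eq_zero (𝕜 := ℝ) |>.mp ?_
  rw [← neg_eq_zero, ← hB, hw]

/-- the Crank-Nicolson FEEC scheme conserves discrete mass: if
`(u^{n+1}, p^{n+1})` solves the midpoint system, then `div_h u^{n+1} = div_h u^n`. -/
theorem stmt10 {V0 V1 V2 : Type*}
    [NormedAddCommGroup V0] [InnerProductSpace ℝ V0]
    [NormedAddCommGroup V1] [InnerProductSpace ℝ V1]
    [NormedAddCommGroup V2] [InnerProductSpace ℝ V2]
    (divh : V1 →ₗ[ℝ] V2) (tgrad : V2 →ₗ[ℝ] V1) (tcurl : V1 →ₗ[ℝ] V0)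
    (Pc : V1 →ₗ[ℝ] V1)
    (htg : ∀ (q : V2) (v : V1), ⟪tgrad q, v⟫ = -⟪q, divh v⟫)
    (htc0 : ∀ q : V2, tcurl (tgrad q) = 0)
    (hPc : ∀ q : V2, Pc (tgrad q) = tgrad q)
    (s : V1 → V1 → V1) (ν α Δt : ℝ) (hΔt : Δt ≠ 0)
    (un un1 : V1) (p : V2)
    (hmom : ∀ v : V1,
      ⟪Δt⁻¹ • (un1 - un), v⟫
        + ⟪(1 / 2 : ℝ) • (un1 + un), s ((1 / 2 : ℝ) • (un1 + un)) v⟫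
        + ⟪tgrad p, v⟫
        + ν * ⟪tcurl ((1 / 2 : ℝ) • (un1 + un)), tcurl v⟫
        + α * ⟪(1 / 2 : ℝ) • (un1 + un) - Pc ((1 / 2 : ℝ) • (un1 + un)), v - Pc v⟫
        = 0)
    (hpres : ∀ q : V2,
      ⟪(1 / 2 : ℝ) • (un1 + un), s ((1 / 2 : ℝ) • (un1 + un)) (tgrad q)⟫
        + ⟪tgrad p, tgrad q⟫ = 0) :
    divh un1 = divh un := by
  have hincrement : ∀ q, ⟪tgrad q, un1 - un⟫ = 0 := by
    intro q
    have hmom_grad := hmom (tgrad q)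
    rw [htc0, hPc, sub_self, inner_zero_right, inner_zero_right, mul_zero, mul_zero,
      add_zero, add_zero] at hmom_grad
    have htime : ⟪Δt⁻¹ • (un1 - un), tgrad q⟫ = 0 := by linarith [hpres q]
    rwa [real_inner_smul_left, mul_eq_zero, or_iff_right (inv_ne_zero hΔt),
      real_inner_comm] at htime
  rw [← sub_eq_zero, ← map_sub]
  exact divh.map_eq_zero_of_inner_neg_adjoint_eq_zero tgrad htg hincrement
end

section
/- The Crank-Nicolson FEEC scheme conserves discrete energy for ν = α = 0: (1/Δt)(∫(1/2)|u^{n+1}|² − ∫(1/2)|u^n|²) = 0. -/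
open RealInnerProductSpace

/-- the Crank-Nicolson FEEC scheme conserves discrete energy for
`ν = α = 0`: `(1/Δt)(∫(1/2)|u^{n+1}|² − ∫(1/2)|u^n|²) = 0`. -/
theorem stmt11 {V1 V2 : Type*}
    [NormedAddCommGroup V1] [InnerProductSpace ℝ V1]
    [NormedAddCommGroup V2] [InnerProductSpace ℝ V2]
    (divh : V1 →ₗ[ℝ] V2) (tgrad : V2 →ₗ[ℝ] V1)
    (htg : ∀ (q : V2) (v : V1), ⟪tgrad q, v⟫ = -⟪q, divh v⟫)
    (s : V1 → V1 → V1)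
    (hskew : ∀ w : V1, ⟪w, s w w⟫ = 0)
    (Δt : ℝ) (hΔt : Δt ≠ 0)
    (un un1 : V1) (p : V2)
    (hdivn : divh un = 0) (hdivn1 : divh un1 = 0)
    (hmom : ∀ v : V1,
      ⟪Δt⁻¹ • (un1 - un), v⟫
        + ⟪(1 / 2 : ℝ) • (un1 + un), s ((1 / 2 : ℝ) • (un1 + un)) v⟫
        + ⟪tgrad p, v⟫ = 0) :
    Δt⁻¹ * ((1 / 2 : ℝ) * ‖un1‖ ^ 2 - (1 / 2 : ℝ) * ‖un‖ ^ 2) = 0 := by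
  set ub : V1 := (1 / 2 : ℝ) • (un1 + un) with hub
  have h := hmom ub
  rw [hskew ub, htg p ub] at h
  have hdiv : divh ub = 0 := by
    rw [hub, map_smul, map_add, hdivn, hdivn1]; simp
  rw [hdiv, inner_zero_right] at h
  have h2 : ⟪Δt⁻¹ • (un1 - un), ub⟫ = 0 := by linarith
  rw [hub, real_inner_smul_left, real_inner_smul_right,
    inner_sub_left, inner_add_right, inner_add_right,
    real_inner_self_eq_norm_sq, real_inner_self_eq_norm_sq,
    real_inner_comm un un1] at h2
  nlinarith [h2]
end

section
/- Energy dissipation identity of the stabilized Crank-Nicolson scheme: (1/Δt)(∫(1/2)|u^{n+1}|² − ∫(1/2)|u^n|²) = −ν ∫|curl̃_h ū|² − α ∫|(I−P^c)ū|², where ū = (u^{n+1}+u^n)/2. -/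
open RealInnerProductSpace

/-- energy dissipation identity of the stabilized Crank-Nicolson
scheme: `(1/Δt)(∫(1/2)|u^{n+1}|² − ∫(1/2)|u^n|²) = −ν ∫|curl̃_h ū|² − α ∫|(I−P^c)ū|²`
where `ū = (u^{n+1}+u^n)/2`. -/
theorem stmt12 {V0 V1 V2 : Type*}
    [NormedAddCommGroup V0] [InnerProductSpace ℝ V0]
    [NormedAddCommGroup V1] [InnerProductSpace ℝ V1]
    [NormedAddCommGroup V2] [InnerProductSpace ℝ V2]
    (divh : V1 →ₗ[ℝ] V2) (tgrad : V2 →ₗ[ℝ] V1) (tcurl : V1 →ₗ[ℝ] V0)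
    (Pc : V1 →ₗ[ℝ] V1)
    (htg : ∀ (q : V2) (v : V1), ⟪tgrad q, v⟫ = -⟪q, divh v⟫)
    (s : V1 → V1 → V1)
    (hskew : ∀ w : V1, ⟪w, s w w⟫ = 0)
    (ν α Δt : ℝ) (hν : 0 ≤ ν) (hα : 0 ≤ α) (hΔt : Δt ≠ 0)
    (un un1 : V1) (p : V2)
    (hdivn : divh un = 0) (hdivn1 : divh un1 = 0)
    (hmom : ∀ v : V1,
      ⟪Δt⁻¹ • (un1 - un), v⟫
        + ⟪(1 / 2 : ℝ) • (un1 + un), s ((1 / 2 : ℝ) • (un1 + un)) v⟫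
        + ⟪tgrad p, v⟫
        + ν * ⟪tcurl ((1 / 2 : ℝ) • (un1 + un)), tcurl v⟫
        + α * ⟪(1 / 2 : ℝ) • (un1 + un) - Pc ((1 / 2 : ℝ) • (un1 + un)), v - Pc v⟫
        = 0) :
    Δt⁻¹ * ((1 / 2 : ℝ) * ‖un1‖ ^ 2 - (1 / 2 : ℝ) * ‖un‖ ^ 2)
      = -ν * ‖tcurl ((1 / 2 : ℝ) • (un1 + un))‖ ^ 2
        - α * ‖(1 / 2 : ℝ) • (un1 + un) - Pc ((1 / 2 : ℝ) • (un1 + un))‖ ^ 2 := by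
  set ub := (1 / 2 : ℝ) • (un1 + un) with hub
  have h := hmom ub
  rw [hskew ub, htg p ub] at h
  have hdiv : divh ub = 0 := by
    rw [hub, map_smul, map_add, hdivn, hdivn1]; simp
  rw [hdiv] at h
  simp only [inner_zero_right, neg_zero, add_zero, zero_add] at h
  have h1 : ⟪Δt⁻¹ • (un1 - un), ub⟫ =
      Δt⁻¹ * ((1 / 2 : ℝ) * ‖un1‖ ^ 2 - (1 / 2 : ℝ) * ‖un‖ ^ 2) := by
    rw [real_inner_smul_left, hub, real_inner_smul_right, inner_sub_left,
      inner_add_right, inner_add_right, real_inner_self_eq_norm_sq,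
      real_inner_self_eq_norm_sq, real_inner_comm un un1]
    ring
  rw [h1, real_inner_self_eq_norm_sq, real_inner_self_eq_norm_sq] at h
  linarith
end
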